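/- Let μ1, μ3 be nonzero real numbers, set μ2 = μ1 and μ4 = μ1, and let H be the Hessian matrix of V at the kite point (0, 2π/3, π, −2π/3). Then 0 is a root of the characteristic polynomial of H of multiplicity exactly one if and only if μ1 ≠ 3μ3 and μ1 ≠ −3μ3. (That is, the kite with θ2 = 2π/3 and μ1 = μ2 = μ4 is a nondegenerate critical point of V, up to rotational symmetry, exactly when μ1 ≠ ±3μ3.) -/

import Mathlib

open Real Polynomial

/-- The potential `V` for the (1+4)-vortex problem with circulation
parameters `μ` and angular positions `θ`. -/
noncomputable def V (μ θ : Fin 4 → ℝ) : ℝ :=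
  -∑ i : Fin 4, ∑ j ∈ Finset.Ioi i,
      μ i * μ j *
        (Real.cos (θ i - θ j) + (1 / 2) * Real.log (2 - 2 * Real.cos (θ i - θ j)))

/-- The partial derivative `∂V/∂θ_k` at the point `θ`. -/
noncomputable def partialV (μ θ : Fin 4 → ℝ) (k : Fin 4) : ℝ :=
  deriv (fun t => V μ (Function.update θ k t)) (θ k)

/-- `θ` is a critical point of `V`: all four partial derivatives vanish. -/
def IsCriticalPt (μ θ : Fin 4 → ℝ) : Prop :=
  ∀ k : Fin 4, partialV μ θ k = 0

/-- The Hessian matrix of `V` at `θ`, `H k l = ∂²V/∂θ_k ∂θ_l`. -/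
noncomputable def hessV (μ θ : Fin 4 → ℝ) : Matrix (Fin 4) (Fin 4) ℝ :=
  fun k l => deriv (fun t => partialV μ (Function.update θ k t) l) (θ k)

/-!
Each term of `V` depends on a single difference `θ i - θ j`, through
`g x = cos x + log (2 - 2 cos x) / 2`, so differentiating twice shows that the Hessian is minus the
weighted Laplacian `∑_{i<j} w_ij (e_i - e_j)(e_i - e_j)ᵀ` with `w_ij = μ_i μ_j g''(θ_i - θ_j)`, and
`g''` depends only on `cos`. At the kite the cosines of the differences are `±1/2, -1`, so the
Hessian is an explicit matrix whose characteristic polynomial is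
`X (X³ + ⋯ - (3/4) μ₁³ μ₃ (μ₁ - 3μ₃)(μ₁ + 3μ₃))`; so `0` is a simple root exactly when the
constant term of the cubic is nonzero.
-/

open Filter Topology

noncomputable def pairPotential (x : ℝ) : ℝ := cos x + 1 / 2 * log (2 - 2 * cos x)

noncomputable def pairPotentialDeriv (x : ℝ) : ℝ := -sin x + sin x / (2 - 2 * cos x)

noncomputable def pairPotentialDeriv2 (x : ℝ) : ℝ := -cos x - 1 / (2 - 2 * cos x)

lemma two_sub_two_mul_cos_ne_zero {x : ℝ} (h : cos x ≠ 1) : 2 - 2 * cos x ≠ 0 := by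
  contrapose! h; linarith

lemma hasDerivAt_two_sub_two_mul_cos (x : ℝ) :
    HasDerivAt (fun y => 2 - 2 * cos y) (2 * sin x) x := by
  simpa using ((hasDerivAt_cos x).const_mul 2).const_sub 2

lemma hasDerivAt_pairPotential {x : ℝ} (h : cos x ≠ 1) :
    HasDerivAt pairPotential (pairPotentialDeriv x) x := by
  have h2 := two_sub_two_mul_cos_ne_zero h
  refine ((hasDerivAt_cos x).fun_add
    (((hasDerivAt_two_sub_two_mul_cos x).log h2).const_mul (1 / 2))).congr_deriv ?_
  simp only [pairPotentialDeriv]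
  field_simp

lemma hasDerivAt_pairPotentialDeriv {x : ℝ} (h : cos x ≠ 1) :
    HasDerivAt pairPotentialDeriv (pairPotentialDeriv2 x) x := by
  have h2 := two_sub_two_mul_cos_ne_zero h
  refine ((hasDerivAt_sin x).fun_neg.fun_add
    ((hasDerivAt_sin x).div (hasDerivAt_two_sub_two_mul_cos x) h2)).congr_deriv ?_
  simp only [pairPotentialDeriv2]
  field_simp
  linear_combination (-1) * sin_sq_add_cos_sq x

def Noncollision {ι : Type*} (θ : ι → ℝ) : Prop :=
  ∀ i j, i ≠ j → cos (θ i - θ j) ≠ 1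

lemma isOpen_setOf_noncollision {ι : Type*} [Finite ι] :
    IsOpen {θ : ι → ℝ | Noncollision θ} := by
  simp only [Noncollision, Set.ofPred_forall]
  refine isOpen_iInter_of_finite fun i => isOpen_iInter_of_finite fun j => ?_
  refine isOpen_iInter_of_finite fun _ => isOpen_ne_fun ?_ continuous_const
  fun_prop

lemma eventually_noncollision_update {ι : Type*} [Finite ι] [DecidableEq ι] {θ : ι → ℝ}
    (hθ : Noncollision θ) (k : ι) :
    ∀ᶠ t in 𝓝 (θ k), Noncollision (Function.update θ k t) := by
  have hc : ContinuousAt (Function.update θ k) (θ k) :=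
    (continuous_const.update k continuous_id).continuousAt
  exact hc.preimage_mem_nhds (isOpen_setOf_noncollision.mem_nhds (by simpa using hθ))

lemma hasDerivAt_sum_comp_update_sub {ι : Type*} [Fintype ι] [DecidableEq ι] {f f' : ℝ → ℝ}
    (c : ι → ι → ℝ) (s : ι → Finset ι) (θ : ι → ℝ) (k : ι)
    (hf : ∀ i, ∀ j ∈ s i, HasDerivAt f (f' (θ i - θ j)) (θ i - θ j)) :
    HasDerivAt
      (fun t => ∑ i, ∑ j ∈ s i, c i j * f (Function.update θ k t i - Function.update θ k t j))
      (∑ i, ∑ j ∈ s i,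
        c i j * ((Pi.single k 1 : ι → ℝ) i - (Pi.single k 1 : ι → ℝ) j) * f' (θ i - θ j))
      (θ k) := by
  have hu := hasDerivAt_pi.1 (hasDerivAt_update θ k (θ k))
  refine HasDerivAt.fun_sum fun i _ => HasDerivAt.fun_sum fun j hj => ?_
  have hd := (hf i j hj).comp_of_eq (θ k) ((hu i).fun_sub (hu j)) (by simp)
  exact (hd.const_mul (c i j)).congr_deriv (by ring)

lemma partialV_eq_sum {μ θ : Fin 4 → ℝ} (hθ : Noncollision θ) (l : Fin 4) :
    partialV μ θ l = -∑ i, ∑ j ∈ Finset.Ioi i, μ i * μ j *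
      ((Pi.single l 1 : Fin 4 → ℝ) i - (Pi.single l 1 : Fin 4 → ℝ) j) *
        pairPotentialDeriv (θ i - θ j) :=
  (hasDerivAt_sum_comp_update_sub (fun i j => μ i * μ j) Finset.Ioi θ l fun i j hj =>
    hasDerivAt_pairPotential (hθ i j (Finset.mem_Ioi.1 hj).ne)).neg.deriv

lemma hessV_eq_sum {μ θ : Fin 4 → ℝ} (hθ : Noncollision θ) (k l : Fin 4) :
    hessV μ θ k l = -∑ i, ∑ j ∈ Finset.Ioi i, μ i * μ j *
      ((Pi.single l 1 : Fin 4 → ℝ) i - (Pi.single l 1 : Fin 4 → ℝ) j) *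
      ((Pi.single k 1 : Fin 4 → ℝ) i - (Pi.single k 1 : Fin 4 → ℝ) j) *
        pairPotentialDeriv2 (θ i - θ j) := by
  have hpartial : (fun t => partialV μ (Function.update θ k t) l) =ᶠ[𝓝 (θ k)] fun t =>
      -∑ i, ∑ j ∈ Finset.Ioi i, μ i * μ j *
        ((Pi.single l 1 : Fin 4 → ℝ) i - (Pi.single l 1 : Fin 4 → ℝ) j) *
          pairPotentialDeriv (Function.update θ k t i - Function.update θ k t j) :=
    (eventually_noncollision_update hθ k).mono fun t ht => partialV_eq_sum ht l
  rw [hessV, hpartial.deriv_eq]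
  exact (hasDerivAt_sum_comp_update_sub _ Finset.Ioi θ k fun i j hj =>
    hasDerivAt_pairPotentialDeriv (hθ i j (Finset.mem_Ioi.1 hj).ne)).neg.deriv

lemma cos_kite (i : Fin 4) :
    cos (![0, 2 * π / 3, π, -(2 * π / 3)] i) = ![1, -1 / 2, -1, -1 / 2] i := by
  have h : cos (2 * π / 3) = -1 / 2 := by
    rw [show 2 * π / 3 = π - π / 3 by ring, cos_pi_sub, cos_pi_div_three]; ring
  fin_cases i <;> simp [h]

lemma sin_kite (i : Fin 4) :
    sin (![0, 2 * π / 3, π, -(2 * π / 3)] i) = ![0, √3 / 2, 0, -(√3 / 2)] i := by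
  have h : sin (2 * π / 3) = √3 / 2 := by
    rw [show 2 * π / 3 = π - π / 3 by ring, sin_pi_sub, sin_pi_div_three]
  fin_cases i <;> simp [h]

lemma cos_kite_sub (i j : Fin 4) :
    cos (![0, 2 * π / 3, π, -(2 * π / 3)] i - ![0, 2 * π / 3, π, -(2 * π / 3)] j) =
      !![1, -1 / 2, -1, -1 / 2; -1 / 2, 1, 1 / 2, -1 / 2; -1, 1 / 2, 1, 1 / 2;
        -1 / 2, -1 / 2, 1 / 2, 1] i j := by
  have h3 : √3 * √3 = 3 := Real.mul_self_sqrt (by norm_num)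
  rw [cos_sub, cos_kite, cos_kite, sin_kite, sin_kite]
  fin_cases i <;> fin_cases j <;> norm_num <;> linarith

lemma noncollision_kite : Noncollision ![0, 2 * π / 3, π, -(2 * π / 3)] := by
  intro i j hij
  rw [cos_kite_sub]
  fin_cases i <;> fin_cases j <;> simp at hij <;> norm_num

lemma sum_Ioi_fin_four {M : Type*} [AddCommMonoid M] (F : Fin 4 → Fin 4 → M) :
    ∑ i, ∑ j ∈ Finset.Ioi i, F i j = F 0 1 + F 0 2 + F 0 3 + F 1 2 + F 1 3 + F 2 3 := by
  simp [Fin.sum_univ_four, show Finset.Ioi (0 : Fin 4) = {1, 2, 3} by decide,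
    show Finset.Ioi (1 : Fin 4) = {2, 3} by decide, show Finset.Ioi (2 : Fin 4) = {3} by decide,
    show Finset.Ioi (3 : Fin 4) = ∅ by decide, add_assoc]

noncomputable def kiteHessian (a b : ℝ) : Matrix (Fin 4) (Fin 4) ℝ :=
  !![-(a ^ 2 / 3) - 3 * a * b / 4, a ^ 2 / 6, 3 * a * b / 4, a ^ 2 / 6;
     a ^ 2 / 6, -(a ^ 2 / 3) + 3 * a * b / 2, -(3 * a * b / 2), a ^ 2 / 6;
     3 * a * b / 4, -(3 * a * b / 2), 9 * a * b / 4, -(3 * a * b / 2);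
     a ^ 2 / 6, a ^ 2 / 6, -(3 * a * b / 2), -(a ^ 2 / 3) + 3 * a * b / 2]

lemma hessV_kite (a b : ℝ) :
    hessV ![a, a, b, a] ![0, 2 * π / 3, π, -(2 * π / 3)] = kiteHessian a b := by
  ext k l
  rw [hessV_eq_sum noncollision_kite, sum_Ioi_fin_four]
  simp only [pairPotentialDeriv2, cos_kite_sub]
  norm_num
  fin_cases k <;> fin_cases l <;> simp [kiteHessian] <;> ring

lemma charpoly_kiteHessian (a b : ℝ) :
    (kiteHessian a b).charpoly = X ^ 4 + C (a ^ 2 - 9 / 2 * a * b) * X ^ 3 +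
      C (a ^ 4 / 4 - 15 / 4 * a ^ 3 * b) * X ^ 2 +
        C (-(3 / 4) * a ^ 3 * b * ((a - 3 * b) * (a + 3 * b))) * X := by
  refine Polynomial.funext fun r => ?_
  rw [Matrix.charpoly, ← Polynomial.coe_evalRingHom, RingHom.map_det, Matrix.det_succ_row_zero]
  simp [Fin.sum_univ_succ, Matrix.det_fin_three, kiteHessian, Matrix.charmatrix_apply,
    Fin.succAbove]
  ring

lemma rootMultiplicity_zero_eq_one_iff {R : Type*} [CommRing R] {p : R[X]} (h0 : p.coeff 0 = 0) :
    p.rootMultiplicity 0 = 1 ↔ p.coeff 1 ≠ 0 := by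
  rw [rootMultiplicity_eq_natTrailingDegree']
  refine ⟨fun h => ?_, fun h1 => ?_⟩
  · have hp : p ≠ 0 := by rintro rfl; simp at h
    simpa [trailingCoeff, h] using trailingCoeff_nonzero_iff_nonzero.2 hp
  · have hp : p ≠ 0 := by rintro rfl; simp at h1
    refine le_antisymm (natTrailingDegree_le_of_ne_zero h1)
      (le_natTrailingDegree hp fun m hm => ?_)
    rwa [Nat.lt_one_iff.1 hm]

/-- The kite `(0, 2pi/3, pi, -2pi/3)` with `mu2 = mu4 = mu1` is a
nondegenerate critical point (0 is a simple root of the characteristic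
polynomial of the Hessian) iff `mu1` is not `3mu3` or `-3mu3`. -/
theorem kite_nondegenerate_iff (μ1 μ3 : ℝ) (h1 : μ1 ≠ 0) (h3 : μ3 ≠ 0) :
    (hessV ![μ1, μ1, μ3, μ1] ![0, 2 * π / 3, π, -(2 * π / 3)]).charpoly.rootMultiplicity 0 = 1 ↔
      μ1 ≠ 3 * μ3 ∧ μ1 ≠ -3 * μ3 := by
  have hcharpoly := charpoly_kiteHessian μ1 μ3
  have hcoeff0 : (kiteHessian μ1 μ3).charpoly.coeff 0 = 0 := by
    rw [hcharpoly]
    simp only [coeff_add, coeff_C_mul, coeff_X_pow, coeff_X_zero]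
    norm_num
  have hcoeff1 : (kiteHessian μ1 μ3).charpoly.coeff 1 =
      -(3 / 4) * μ1 ^ 3 * μ3 * ((μ1 - 3 * μ3) * (μ1 + 3 * μ3)) := by
    rw [hcharpoly]
    simp only [coeff_add, coeff_C_mul, coeff_X_pow, coeff_X_one]
    norm_num
  rw [hessV_kite, rootMultiplicity_zero_eq_one_iff hcoeff0, hcoeff1]
  simp [h1, h3, sub_eq_zero, add_eq_zero_iff_eq_neg]
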